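/- arXiv:math/0304357 — 2 statements merged into one kernel-verified Lean document; each statement's English description precedes it below -/
import Mathlib

section
/- The classical Laguerre functions ℓ_n^α(t) = e^{-t} L_n^α(2t) satisfy the lowering relation t·ℓ''_n(t) + (2t+ν)·ℓ'_n(t) + (t+ν)·ℓ_n(t) = -2(n+ν-1)·ℓ_{n-1}^α(t) for n ≥ 1, where ν = α+1. -/
open Finset

/-- The generalized Laguerre polynomial `L_n^α(t) = ∑_{k=0}^n (-1)^k binom(n+α, n-k) t^k / k!`,
where `binom(n+α, n-k) = ∏_{i=1}^{n-k} (α+k+i)/i`. It is the polynomial solution of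
`t y'' + (α+1-t) y' + n y = 0`. -/
noncomputable def genLaguerre (n : ℕ) (α : ℝ) (t : ℝ) : ℝ :=
  ∑ k ∈ range (n + 1),
    ((-1 : ℝ) ^ k / (Nat.factorial k)) *
      (∏ i ∈ range (n - k), (α + k + 1 + i) / (i + 1)) * t ^ k

/-- The Laguerre function `ℓ_n^α(t) = e^{-t} L_n^α(2t)`. -/
noncomputable def laguerreFun (n : ℕ) (α : ℝ) (t : ℝ) : ℝ :=
  Real.exp (-t) * genLaguerre n α (2 * t)

open Polynomial Real

/-! Since `ℓ_n(t) = e^{-t} L_n(2t)`, the operator `t ∂² + (2t + ν) ∂ + (t + ν)` acts on `ℓ_n` as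
`e^{-t}` times `2 (s ∂² + ν ∂)` applied to `L_n` at `s = 2t`. The claim thus reduces to the
polynomial identity `s L_n'' + ν L_n' = -(n + α) L_{n-1}`. On coefficients it says that
`c_n(j+1) (j+1)(j+ν) = -(n+α) c_{n-1}(j)`, which holds because the rising products in the two
coefficients differ only in their first and last factors, `j+ν` and `n+α`. -/

namespace Polynomial

variable {R : Type*} [CommRing R]

theorem X_mul_derivative_derivative_add_C_mul_derivative_eq {p q : R[X]} (β : R)
    (h : ∀ j : ℕ, p.coeff (j + 1) * ((j + 1) * (j + β)) = q.coeff j) :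
    X * derivative (derivative p) + C β * derivative p = q := by
  ext (_ | j)
  · simpa [coeff_derivative, mul_comm] using h 0
  · rw [← h (j + 1)]
    simp only [coeff_add, coeff_X_mul, coeff_C_mul, coeff_derivative]
    push_cast
    ring

end Polynomial

theorem mul_prod_range_shift_div {K : Type*} [Field K] (x : K) (r : ℕ) :
    x * ∏ i ∈ range r, (x + 1 + i) / (i + 1) = (x + r) * ∏ i ∈ range r, (x + i) / (i + 1) := by
  induction r with
  | zero => simp
  | succ r ih =>
    rw [prod_range_succ, prod_range_succ]
    push_cast
    linear_combination ((x + 1 + r) / (r + 1)) * ih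

noncomputable def genLaguerreCoeff (n : ℕ) (α : ℝ) (k : ℕ) : ℝ :=
  (-1 : ℝ) ^ k / k.factorial * ∏ i ∈ range (n - k), (α + k + 1 + i) / (i + 1)

noncomputable def genLaguerrePoly (n : ℕ) (α : ℝ) : ℝ[X] :=
  ∑ k ∈ range (n + 1), C (genLaguerreCoeff n α k) * X ^ k

theorem eval_genLaguerrePoly (n : ℕ) (α t : ℝ) :
    (genLaguerrePoly n α).eval t = genLaguerre n α t := by
  simp [genLaguerrePoly, genLaguerre, genLaguerreCoeff, eval_finsetSum]

theorem coeff_genLaguerrePoly (n : ℕ) (α : ℝ) (k : ℕ) :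
    (genLaguerrePoly n α).coeff k = if k ≤ n then genLaguerreCoeff n α k else 0 := by
  simp [genLaguerrePoly, finsetSum_coeff]

theorem genLaguerreCoeff_succ_succ_mul {m j : ℕ} (α : ℝ) (hj : j ≤ m) :
    genLaguerreCoeff (m + 1) α (j + 1) * ((j + 1) * (j + (α + 1))) =
      -(m + 1 + α) * genLaguerreCoeff m α j := by
  have hshift := mul_prod_range_shift_div (α + j + 1) (m - j)
  have hprod : ∏ i ∈ range (m - j), (α + ↑(j + 1) + 1 + i) / (i + 1) =
      ∏ i ∈ range (m - j), (α + j + 1 + 1 + i) / (i + 1) := by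
    push_cast
    ring_nf
  rw [Nat.cast_sub hj] at hshift
  simp only [genLaguerreCoeff, Nat.add_sub_add_right, hprod, Nat.factorial_succ]
  push_cast
  field_simp
  linear_combination -(-1 : ℝ) ^ j * hshift

theorem genLaguerrePoly_lowering (m : ℕ) (α : ℝ) :
    X * derivative (derivative (genLaguerrePoly (m + 1) α)) +
        C (α + 1) * derivative (genLaguerrePoly (m + 1) α) =
      C (-(m + 1 + α)) * genLaguerrePoly m α := by
  refine X_mul_derivative_derivative_add_C_mul_derivative_eq _ fun j => ?_
  rw [coeff_C_mul, coeff_genLaguerrePoly, coeff_genLaguerrePoly]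
  split_ifs with hj₁ hj hj
  · exact genLaguerreCoeff_succ_succ_mul α hj
  · omega
  · omega
  · simp

theorem laguerreFun_eq (n : ℕ) (α : ℝ) :
    laguerreFun n α = fun t => exp (-t) * (genLaguerrePoly n α).eval (2 * t) := by
  funext t
  rw [laguerreFun, eval_genLaguerrePoly]

theorem deriv_exp_neg_mul_eval_two_mul (p : ℝ[X]) :
    deriv (fun t => exp (-t) * p.eval (2 * t)) =
      fun t => exp (-t) * (C 2 * derivative p - p).eval (2 * t) := by
  funext t
  have hexp : HasDerivAt (fun t => exp (-t)) (-exp (-t)) t := by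
    simpa using (hasDerivAt_neg t).exp
  have hp : HasDerivAt (fun t => p.eval (2 * t)) (p.derivative.eval (2 * t) * 2) t :=
    (p.hasDerivAt (2 * t)).comp t ((hasDerivAt_id t).const_mul 2 |>.congr_deriv (mul_one 2))
  rw [(hexp.fun_mul hp).deriv]
  simp only [eval_sub, eval_mul, eval_C]
  ring

theorem laguerreFun_lowering (n : ℕ) (hn : 1 ≤ n) (α ν : ℝ) (hν : ν = α + 1) (t : ℝ) :
    t * deriv (deriv (laguerreFun n α)) t + (2 * t + ν) * deriv (laguerreFun n α) t +
      (t + ν) * laguerreFun n α t = -2 * (n + ν - 1) * laguerreFun (n - 1) α t := by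
  obtain ⟨m, rfl⟩ := Nat.exists_eq_add_of_le' hn
  subst hν
  have hlow := congrArg (eval (2 * t)) (genLaguerrePoly_lowering m α)
  simp only [eval_add, eval_mul, eval_X, eval_C, eval_genLaguerrePoly] at hlow
  rw [laguerreFun_eq, deriv_exp_neg_mul_eval_two_mul, deriv_exp_neg_mul_eval_two_mul]
  simp only [laguerreFun, eval_sub, eval_mul, eval_C,
    derivative_sub, derivative_mul, derivative_C, zero_mul, zero_add]
  push_cast
  linear_combination 2 * exp (-t) * hlow
end

section
/- The classical Laguerre functions satisfy the three-term relation 2t·(ℓ_n^α)'(t) + ν·ℓ_n^α(t) = (n+1)·ℓ_{n+1}^α(t) - (n+ν-1)·ℓ_{n-1}^α(t) for n ≥ 1, where ν = α+1 and ℓ_n^α(t) = e^{-t}L_n^α(2t). -/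
open Finset

/-! ### Auxiliary definitions and lemmas -/

noncomputable def lagP (α : ℝ) (n k : ℕ) : ℝ := ∏ i ∈ range (n - k), (α + k + 1 + i) / (i + 1)

noncomputable def lagC (α : ℝ) (n k : ℕ) : ℝ := ((-1 : ℝ) ^ k / (Nat.factorial k)) * lagP α n k

lemma genLaguerre_eq (n : ℕ) (α t : ℝ) :
    genLaguerre n α t = ∑ k ∈ range (n + 1), lagC α n k * t ^ k := rfl

lemma lagP_succ (α : ℝ) (n k : ℕ) (hk : k ≤ n) :
    ((n : ℝ) + 1 - k) * lagP α (n + 1) k = (α + n + 1) * lagP α n k := by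
  have h : n + 1 - k = (n - k) + 1 := by omega
  have hc : ((n - k : ℕ) : ℝ) = (n : ℝ) - k := by push_cast [hk]; ring
  have hne : ((n : ℝ) - k) + 1 ≠ 0 := by
    have : (k : ℝ) ≤ n := by exact_mod_cast hk
    linarith
  have hstep : lagP α (n + 1) k
      = lagP α n k * ((α + k + 1 + ((n : ℝ) - k)) / (((n : ℝ) - k) + 1)) := by
    unfold lagP; rw [h, prod_range_succ, hc]
  rw [hstep]
  field_simp
  ring

lemma prod_div_fact (m : ℕ) (f : ℕ → ℝ) :
    ∏ i ∈ range m, (f i / (i + 1)) = (∏ i ∈ range m, f i) / m.factorial := by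
  rw [Finset.prod_div_distrib]
  congr 1
  exact_mod_cast Finset.prod_range_add_one_eq_factorial m

lemma lagP_shift (α : ℝ) (n k : ℕ) (hk : k < n) :
    ((n : ℝ) - k) * lagP α n k = (α + k + 1) * lagP α n (k + 1) := by
  have hm : n - k = (n - (k + 1)) + 1 := by omega
  set m := n - (k + 1) with hmdef
  have hc : ((n : ℝ) - k) = (m : ℝ) + 1 := by
    rw [hmdef]; push_cast [show k + 1 ≤ n by omega, show 1 + k ≤ n by omega]; ring
  unfold lagP
  rw [hm, ← hmdef]
  rw [prod_div_fact m (fun i => α + (k + 1 : ℕ) + 1 + i),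
      prod_div_fact (m + 1) (fun i => α + k + 1 + i)]
  rw [prod_range_succ']
  have he : ∀ i ∈ range m, (α + (k : ℝ) + 1 + ((i : ℕ) + 1 : ℕ)) = α + ((k + 1 : ℕ) : ℝ) + 1 + i := by
    intro i _; push_cast; ring
  rw [prod_congr rfl he]
  rw [Nat.factorial_succ, hc]
  have h1 : ((m : ℝ) + 1) ≠ 0 := by positivity
  have h2 : ((m.factorial : ℝ)) ≠ 0 := by exact_mod_cast m.factorial_ne_zero
  push_cast
  field_simp
  ring

lemma lagP_self (α : ℝ) (n : ℕ) : lagP α n n = 1 := by simp [lagP]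

lemma lagP_diamond (α : ℝ) (n k : ℕ) (hk : k < n) :
    ((n : ℝ) + k + α + 2) * lagP α n (k + 1)
      = ((n : ℝ) + 1) * lagP α (n + 1) (k + 1) - ((k : ℝ) + 1) * lagP α n k := by
  have hnk : ((n : ℝ) - k) ≠ 0 := by
    have : (k : ℝ) + 1 ≤ n := by exact_mod_cast hk
    intro h; linarith [h]
  apply mul_left_cancel₀ hnk
  have h1 := lagP_succ α n (k + 1) hk
  push_cast at h1
  have h2 := lagP_shift α n k hk
  linear_combination (-(n : ℝ) - 1) * h1 + ((k : ℝ) + 1) * h2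

lemma lagC_S1 (α : ℝ) (n k : ℕ) (hn : 1 ≤ n) (hk : k < n) :
    ((n : ℝ) + α) * lagC α (n - 1) k = ((n : ℝ) - k) * lagC α n k := by
  have h := lagP_succ α (n - 1) k (by omega)
  have hcast : ((n - 1 : ℕ) : ℝ) = (n : ℝ) - 1 := by push_cast [hn]; ring
  rw [hcast] at h
  have hrw : (n - 1) + 1 = n := by omega
  rw [hrw] at h
  unfold lagC
  linear_combination (-(-1 : ℝ) ^ k / (Nat.factorial k)) * h

lemma lagC_zero (α : ℝ) (n : ℕ) :
    ((n : ℝ) + α + 1) * lagC α n 0 = ((n : ℝ) + 1) * lagC α (n + 1) 0 := by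
  have h := lagP_succ α n 0 (Nat.zero_le n)
  simp only [lagC, pow_zero, Nat.factorial_zero, Nat.cast_zero, Nat.cast_one]
  push_cast at h ⊢
  linear_combination -h

lemma lagC_top (α : ℝ) (n : ℕ) :
    ((n : ℝ) + 1) * lagC α (n + 1) (n + 1) + lagC α n n = 0 := by
  simp only [lagC, lagP_self]
  rw [pow_succ, Nat.factorial_succ]
  have h1 : ((n : ℝ) + 1) ≠ 0 := by positivity
  have h2 : ((n.factorial : ℝ)) ≠ 0 := by exact_mod_cast n.factorial_ne_zero
  push_cast
  field_simp
  ring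

lemma lagC_diamond (α : ℝ) (n k : ℕ) (hk : k < n) :
    ((n : ℝ) + k + α + 2) * lagC α n (k + 1)
      = ((n : ℝ) + 1) * lagC α (n + 1) (k + 1) + lagC α n k := by
  have h1 : ((k : ℝ) + 1) ≠ 0 := by positivity
  have hkf : ((k.factorial : ℝ)) ≠ 0 := by exact_mod_cast k.factorial_ne_zero
  have hG : ∀ m : ℕ, ((k : ℝ) + 1) * lagC α m (k + 1)
      = -((-1 : ℝ) ^ k / (Nat.factorial k)) * lagP α m (k + 1) := by
    intro m
    simp only [lagC]
    rw [pow_succ, Nat.factorial_succ]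
    push_cast
    field_simp
  have hd := lagP_diamond α n k hk
  have heq : lagC α n k = ((-1 : ℝ) ^ k / (Nat.factorial k)) * lagP α n k := rfl
  apply mul_left_cancel₀ h1
  linear_combination ((n : ℝ) + k + α + 2) * hG n - ((n : ℝ) + 1) * hG (n + 1)
    - ((-1 : ℝ) ^ k / (Nat.factorial k)) * hd - ((k : ℝ) + 1) * heq

lemma laguerre_F4 (α : ℝ) (n : ℕ) (s : ℝ) :
    ∑ k ∈ range (n + 1), ((n : ℝ) + k + α + 1) * lagC α n k * s ^ k
      = (∑ k ∈ range (n + 2), ((n : ℝ) + 1) * lagC α (n + 1) k * s ^ k)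
        + ∑ k ∈ range (n + 1), lagC α n k * s ^ (k + 1) := by
  rw [Finset.sum_range_succ' (fun k => ((n : ℝ) + k + α + 1) * lagC α n k * s ^ k) n]
  rw [Finset.sum_range_succ' (fun k => ((n : ℝ) + 1) * lagC α (n + 1) k * s ^ k) (n + 1)]
  rw [Finset.sum_range_succ (fun k => ((n : ℝ) + 1) * lagC α (n + 1) (k + 1) * s ^ (k + 1)) n]
  rw [Finset.sum_range_succ (fun k => lagC α n k * s ^ (k + 1)) n]
  have hcong : ∑ k ∈ range n, ((n : ℝ) + (k + 1 : ℕ) + α + 1) * lagC α n (k + 1) * s ^ (k + 1)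
      = ∑ k ∈ range n, (((n : ℝ) + 1) * lagC α (n + 1) (k + 1) * s ^ (k + 1)
          + lagC α n k * s ^ (k + 1)) := by
    apply Finset.sum_congr rfl
    intro k hk
    have hk' : k < n := Finset.mem_range.mp hk
    have hd := lagC_diamond α n k hk'
    push_cast
    linear_combination s ^ (k + 1) * hd
  rw [Finset.sum_add_distrib] at hcong
  have htop := lagC_top α n
  have hzero := lagC_zero α n
  push_cast
  push_cast at hcong
  linear_combination hcong - s ^ (n + 1) * htop + hzero

lemma laguerre_main (α : ℝ) (n : ℕ) (hn : 1 ≤ n) (s : ℝ) :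
    s * (2 * (∑ k ∈ range (n + 1), lagC α n k * (k * s ^ (k - 1))) - genLaguerre n α s)
      + (α + 1) * genLaguerre n α s
    = ((n : ℝ) + 1) * genLaguerre (n + 1) α s - ((n : ℝ) + α) * genLaguerre (n - 1) α s := by
  have hn1 : n - 1 + 1 = n := by omega
  rw [genLaguerre_eq, genLaguerre_eq, genLaguerre_eq, hn1]
  have hpow : ∀ k : ℕ, s * ((k : ℝ) * s ^ (k - 1)) = (k : ℝ) * s ^ k := by
    intro k
    cases k with
    | zero => simp
    | succ m => push_cast; rw [pow_succ]; ring
  have hF1 : s * (2 * ∑ k ∈ range (n + 1), lagC α n k * (k * s ^ (k - 1)))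
      = ∑ k ∈ range (n + 1), 2 * (k : ℝ) * lagC α n k * s ^ k := by
    rw [Finset.mul_sum, Finset.mul_sum]
    apply Finset.sum_congr rfl
    intro k _
    calc s * (2 * (lagC α n k * ((k : ℝ) * s ^ (k - 1))))
        = 2 * lagC α n k * (s * ((k : ℝ) * s ^ (k - 1))) := by ring
      _ = 2 * (k : ℝ) * lagC α n k * s ^ k := by rw [hpow]; ring
  have hF3 : s * (∑ k ∈ range (n + 1), lagC α n k * s ^ k)
      = ∑ k ∈ range (n + 1), lagC α n k * s ^ (k + 1) := by
    rw [Finset.mul_sum]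
    apply Finset.sum_congr rfl
    intro k _
    rw [pow_succ]; ring
  have hF2 : ((n : ℝ) + α) * ∑ k ∈ range n, lagC α (n - 1) k * s ^ k
      = ∑ k ∈ range (n + 1), ((n : ℝ) - k) * lagC α n k * s ^ k := by
    rw [Finset.sum_range_succ, Finset.mul_sum]
    simp only [sub_self, zero_mul, add_zero]
    apply Finset.sum_congr rfl
    intro k hk
    have hk' : k < n := Finset.mem_range.mp hk
    linear_combination s ^ k * lagC_S1 α n k hn hk'
  have hmerge : (∑ k ∈ range (n + 1), 2 * (k : ℝ) * lagC α n k * s ^ k)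
      + (α + 1) * (∑ k ∈ range (n + 1), lagC α n k * s ^ k)
      + (∑ k ∈ range (n + 1), ((n : ℝ) - k) * lagC α n k * s ^ k)
      = ∑ k ∈ range (n + 1), ((n : ℝ) + k + α + 1) * lagC α n k * s ^ k := by
    rw [Finset.mul_sum, ← Finset.sum_add_distrib, ← Finset.sum_add_distrib]
    apply Finset.sum_congr rfl
    intro k _
    ring
  have hB : ((n : ℝ) + 1) * (∑ k ∈ range (n + 2), lagC α (n + 1) k * s ^ k)
      = ∑ k ∈ range (n + 2), ((n : ℝ) + 1) * lagC α (n + 1) k * s ^ k := by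
    rw [Finset.mul_sum]
    apply Finset.sum_congr rfl
    intro k _
    ring
  have hF4 := laguerre_F4 α n s
  linear_combination hF1 - hF3 + hF2 + hmerge + hF4 - hB

lemma hasDerivAt_genLaguerre (n : ℕ) (α : ℝ) (t : ℝ) :
    HasDerivAt (fun s => genLaguerre n α s)
      (∑ k ∈ range (n + 1), lagC α n k * (k * t ^ (k - 1))) t := by
  have hfun : (fun s => genLaguerre n α s)
      = fun s => ∑ k ∈ range (n + 1), lagC α n k * s ^ k := by
    funext s; exact genLaguerre_eq n α s
  rw [hfun]
  apply HasDerivAt.fun_sum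
  intro k _
  exact (hasDerivAt_pow k t).const_mul (lagC α n k)

theorem laguerreFun_three_term (n : ℕ) (hn : 1 ≤ n) (α ν : ℝ) (hν : ν = α + 1) (t : ℝ) :
    2 * t * deriv (laguerreFun n α) t + ν * laguerreFun n α t =
      (n + 1) * laguerreFun (n + 1) α t - (n + ν - 1) * laguerreFun (n - 1) α t := by
  subst hν
  have h1 : HasDerivAt (fun t : ℝ => Real.exp (-t)) (-Real.exp (-t)) t := by
    simpa [Function.comp_def] using (Real.hasDerivAt_exp (-t)).comp t (hasDerivAt_neg t)
  have h2' : HasDerivAt (fun t : ℝ => 2 * t) 2 t := by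
    simpa using (hasDerivAt_id t).const_mul (2 : ℝ)
  have h2 : HasDerivAt (fun t : ℝ => genLaguerre n α (2 * t))
      ((∑ k ∈ range (n + 1), lagC α n k * (k * (2 * t) ^ (k - 1))) * 2) t := by
    simpa [Function.comp_def] using
      (hasDerivAt_genLaguerre n α (2 * t)).comp t h2'
  have hd : HasDerivAt (laguerreFun n α)
      (-Real.exp (-t) * genLaguerre n α (2 * t)
        + Real.exp (-t) * ((∑ k ∈ range (n + 1), lagC α n k * (k * (2 * t) ^ (k - 1))) * 2)) t := by
    exact h1.mul h2
  rw [hd.deriv]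
  have hm := laguerre_main α n hn (2 * t)
  simp only [laguerreFun]
  linear_combination Real.exp (-t) * hm
end
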